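/- arXiv:2306.13934 — 3 statements merged into one kernel-verified Lean document; each statement's English description precedes it below -/
import Mathlib

section
/- Let 𝒜 be an abelian category. Suppose given a commutative diagram consisting of three exact rows 0 → F' →ᵃ F →ᵈ F'' → 0, 0 → E' →ᵇ E →ᵉ E'' → 0, 0 → G' →ᶜ G →ᶠ G'' → 0 and three exact columns 0 → F' →^{j'} E' →^{π} G' → 0, 0 → F →ʲ E →^{q} G → 0, 0 → F'' →^{j''} E'' →^{q''} G'' → 0, together with morphisms s : E'' → E and r : E → E' splitting the middle row, i.e. e∘s = id_{E''}, r∘b = id_{E'}, and b∘r + s∘e = id_E. Then: (i) the composite q∘s∘j'' : F'' → G factors (necessarily uniquely) through the monomorphism c : G' → G, yielding a morphism δ : F'' → G'; (ii) the composite π∘r∘j : F → G' satisfies π∘r∘j∘a = 0, hence factors uniquely through the epimorphism d : F → F'', yielding a morphism ε : F'' → G'; and (iii) ε = −δ. -/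
/-!
Since `q ∘ j = 0` and `s ∘ e = 1 - b ∘ r`, the splitting gives
`q ∘ s ∘ j'' ∘ d = q ∘ s ∘ e ∘ j = -(q ∘ b ∘ r ∘ j) = -(c ∘ π ∘ r ∘ j)`.
Hence `c ∘ δ ∘ d = -(c ∘ ε ∘ d)`, and `ε = -δ` because `c` is mono and `d` is epi.
-/

open LinearMap

section

variable {R : Type*} [Ring R]

theorem Function.Exact.existsUnique_comp_eq
    {M N P Q : Type*} [AddCommGroup M] [AddCommGroup N] [AddCommGroup P] [AddCommGroup Q]
    [Module R M] [Module R N] [Module R P] [Module R Q]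
    {a : M →ₗ[R] N} {d : N →ₗ[R] P} (had : Function.Exact a d) (hd : Function.Surjective d)
    {g : N →ₗ[R] Q} (hg : g ∘ₗ a = 0) :
    ∃! ε : P →ₗ[R] Q, ε ∘ₗ d = g := by
  have hrange : range a ≤ ker g := range_le_ker_iff.2 hg
  refine ⟨(range a).liftQ g hrange ∘ₗ (had.linearEquivOfSurjective hd).symm.toLinearMap,
    ?_, fun ε hε => (cancel_right hd).1 ?_⟩
  · ext x
    simp
  · ext x
    simp [hε]

variable {F' F F'' E' E E'' G' G : Type*}
  [AddCommGroup F'] [AddCommGroup F] [AddCommGroup F'']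
  [AddCommGroup E'] [AddCommGroup E] [AddCommGroup E'']
  [AddCommGroup G'] [AddCommGroup G]
  [Module R F'] [Module R F] [Module R F'']
  [Module R E'] [Module R E] [Module R E'']
  [Module R G'] [Module R G]

theorem comp_retraction_comp_comp_eq_zero
    {a : F' →ₗ[R] F} {b : E' →ₗ[R] E} {j' : F' →ₗ[R] E'} {π : E' →ₗ[R] G'}
    {j : F →ₗ[R] E} {r : E →ₗ[R] E'}
    (hcomm : j ∘ₗ a = b ∘ₗ j') (hr : r ∘ₗ b = LinearMap.id) (hπj' : π ∘ₗ j' = 0) :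
    π ∘ₗ r ∘ₗ j ∘ₗ a = 0 := by
  rw [hcomm, ← comp_assoc j' b r, hr, id_comp, hπj']

theorem comp_section_comp_comp_eq_neg
    {d : F →ₗ[R] F''} {b : E' →ₗ[R] E} {e : E →ₗ[R] E''} {c : G' →ₗ[R] G}
    {π : E' →ₗ[R] G'} {j : F →ₗ[R] E} {q : E →ₗ[R] G} {j'' : F'' →ₗ[R] E''}
    {r : E →ₗ[R] E'} {s : E'' →ₗ[R] E}
    (hqj : q ∘ₗ j = 0) (hcomm₂ : j'' ∘ₗ d = e ∘ₗ j) (hcomm₃ : q ∘ₗ b = c ∘ₗ π)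
    (hsplit : b ∘ₗ r + s ∘ₗ e = LinearMap.id) :
    (q ∘ₗ s ∘ₗ j'') ∘ₗ d = -(c ∘ₗ π ∘ₗ r ∘ₗ j) := by
  have hse : s ∘ₗ e = LinearMap.id - b ∘ₗ r := eq_sub_of_add_eq' hsplit
  calc (q ∘ₗ s ∘ₗ j'') ∘ₗ d = q ∘ₗ (s ∘ₗ e) ∘ₗ j := by simp only [comp_assoc, hcomm₂]
    _ = q ∘ₗ j - (q ∘ₗ b) ∘ₗ r ∘ₗ j := by
      rw [hse, sub_comp, comp_sub, id_comp, comp_assoc, comp_assoc]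
    _ = -(c ∘ₗ π ∘ₗ r ∘ₗ j) := by rw [hqj, hcomm₃, zero_sub, comp_assoc]

end

theorem three_by_three_splitting_delta_general
    {R : Type*} [Ring R]
    {F' F F'' E' E E'' G' G : Type*}
    [AddCommGroup F'] [AddCommGroup F] [AddCommGroup F'']
    [AddCommGroup E'] [AddCommGroup E] [AddCommGroup E'']
    [AddCommGroup G'] [AddCommGroup G]
    [Module R F'] [Module R F] [Module R F'']
    [Module R E'] [Module R E] [Module R E'']
    [Module R G'] [Module R G]
    -- rows
    (a : F' →ₗ[R] F) (d : F →ₗ[R] F'')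
    (b : E' →ₗ[R] E) (e : E →ₗ[R] E'')
    (c : G' →ₗ[R] G)
    -- columns
    (j' : F' →ₗ[R] E') (π : E' →ₗ[R] G')
    (j : F →ₗ[R] E) (q : E →ₗ[R] G)
    (j'' : F'' →ₗ[R] E'')
    -- exactness of the rows
    (had : Function.Exact a d) (hd : Function.Surjective d)
    (hc : Function.Injective c)
    -- exactness of the columns
    (hπ' : Function.Exact j' π)
    (hq' : Function.Exact j q)
    -- commutativity of the solid diagram
    (hcomm₁ : j ∘ₗ a = b ∘ₗ j') (hcomm₂ : j'' ∘ₗ d = e ∘ₗ j)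
    (hcomm₃ : q ∘ₗ b = c ∘ₗ π)
    -- the splitting of the middle row
    (r : E →ₗ[R] E') (s : E'' →ₗ[R] E)
    (hr : r ∘ₗ b = LinearMap.id)
    (hsplit : b ∘ₗ r + s ∘ₗ e = LinearMap.id) :
    (∃! δ : F'' →ₗ[R] G', c ∘ₗ δ = q ∘ₗ s ∘ₗ j'') ∧
      (π ∘ₗ r ∘ₗ j ∘ₗ a = 0) ∧
      (∃! ε : F'' →ₗ[R] G', ε ∘ₗ d = π ∘ₗ r ∘ₗ j) ∧
      (∀ δ ε : F'' →ₗ[R] G',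
        c ∘ₗ δ = q ∘ₗ s ∘ₗ j'' → ε ∘ₗ d = π ∘ₗ r ∘ₗ j → ε = -δ) := by
  have hzero := comp_retraction_comp_comp_eq_zero hcomm₁ hr hπ'.linearMap_comp_eq_zero
  obtain ⟨ε, hε, hε_unique⟩ := had.existsUnique_comp_eq hd (g := π ∘ₗ r ∘ₗ j) hzero
  have hδ : q ∘ₗ s ∘ₗ j'' = c ∘ₗ (-ε) := (cancel_right hd).1 <| by
    rw [comp_section_comp_comp_eq_neg hq'.linearMap_comp_eq_zero hcomm₂ hcomm₃ hsplit, ← hε,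
      comp_neg, neg_comp, comp_assoc]
  have hδ_iff (δ : F'' →ₗ[R] G') : c ∘ₗ δ = q ∘ₗ s ∘ₗ j'' ↔ δ = -ε := by
    rw [hδ, cancel_left hc]
  refine ⟨⟨-ε, (hδ_iff _).2 rfl, fun δ h => (hδ_iff δ).1 h⟩, hzero, ⟨ε, hε, hε_unique⟩, ?_⟩
  intro δ ε' hδ' hε'
  rw [(hδ_iff δ).1 hδ', neg_neg]
  exact hε_unique ε' hε'

/-- (Formalized, as the context allows, in the abelian category of
modules over a ring `R`.)  Given a commutative `3 × 3` diagram with exact rows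
`0 → F' →ᵃ F →ᵈ F'' → 0`, `0 → E' →ᵇ E →ᵉ E'' → 0`, `0 → G' →ᶜ G →ᶠ G'' → 0`
and exact columns `0 → F' →ʲ' E' →^π G' → 0`, `0 → F →ʲ E →^q G → 0`,
`0 → F'' →ʲ'' E'' →^{q''} G'' → 0`, together with a splitting `r : E → E'`,
`s : E'' → E` of the middle row (`r∘b = id`, `e∘s = id`, `b∘r + s∘e = id`), we have:
(i) the composite `q∘s∘j'' : F'' → G` factors (necessarily uniquely) through the
monomorphism `c : G' → G`, yielding `δ : F'' → G'`;
(ii) the composite `π∘r∘j : F → G'` kills the image of `a`, hence factors uniquely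
through the epimorphism `d : F → F''`, yielding `ε : F'' → G'`;
(iii) `ε = −δ`. -/
theorem three_by_three_splitting_delta
    {R : Type*} [Ring R]
    {F' F F'' E' E E'' G' G G'' : Type*}
    [AddCommGroup F'] [AddCommGroup F] [AddCommGroup F'']
    [AddCommGroup E'] [AddCommGroup E] [AddCommGroup E'']
    [AddCommGroup G'] [AddCommGroup G] [AddCommGroup G'']
    [Module R F'] [Module R F] [Module R F'']
    [Module R E'] [Module R E] [Module R E'']
    [Module R G'] [Module R G] [Module R G'']
    -- rows
    (a : F' →ₗ[R] F) (d : F →ₗ[R] F'')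
    (b : E' →ₗ[R] E) (e : E →ₗ[R] E'')
    (c : G' →ₗ[R] G) (f : G →ₗ[R] G'')
    -- columns
    (j' : F' →ₗ[R] E') (π : E' →ₗ[R] G')
    (j : F →ₗ[R] E) (q : E →ₗ[R] G)
    (j'' : F'' →ₗ[R] E'') (q'' : E'' →ₗ[R] G'')
    -- exactness of the rows
    (ha : Function.Injective a) (had : Function.Exact a d) (hd : Function.Surjective d)
    (hb : Function.Injective b) (hbe : Function.Exact b e) (he : Function.Surjective e)
    (hc : Function.Injective c) (hcf : Function.Exact c f) (hf : Function.Surjective f)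
    -- exactness of the columns
    (hj' : Function.Injective j') (hπ' : Function.Exact j' π) (hπ : Function.Surjective π)
    (hj : Function.Injective j) (hq' : Function.Exact j q) (hq : Function.Surjective q)
    (hj'' : Function.Injective j'') (hq''e : Function.Exact j'' q'')
    (hq'' : Function.Surjective q'')
    -- commutativity of the solid diagram
    (hcomm₁ : j ∘ₗ a = b ∘ₗ j') (hcomm₂ : j'' ∘ₗ d = e ∘ₗ j)
    (hcomm₃ : q ∘ₗ b = c ∘ₗ π) (hcomm₄ : q'' ∘ₗ e = f ∘ₗ q)
    -- the splitting of the middle row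
    (r : E →ₗ[R] E') (s : E'' →ₗ[R] E)
    (hr : r ∘ₗ b = LinearMap.id) (hs : e ∘ₗ s = LinearMap.id)
    (hsplit : b ∘ₗ r + s ∘ₗ e = LinearMap.id) :
    (∃! δ : F'' →ₗ[R] G', c ∘ₗ δ = q ∘ₗ s ∘ₗ j'') ∧
      (π ∘ₗ r ∘ₗ j ∘ₗ a = 0) ∧
      (∃! ε : F'' →ₗ[R] G', ε ∘ₗ d = π ∘ₗ r ∘ₗ j) ∧
      (∀ δ ε : F'' →ₗ[R] G',
        c ∘ₗ δ = q ∘ₗ s ∘ₗ j'' → ε ∘ₗ d = π ∘ₗ r ∘ₗ j → ε = -δ) :=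
  three_by_three_splitting_delta_general a d b e c j' π j q j'' had hd hc hπ' hq' hcomm₁ hcomm₂
    hcomm₃ r s hr hsplit
end

section
/- Let R be a commutative ring, Ω an R-module, and d : R → Ω a derivation. Let n be a natural number and T an invertible n × n matrix over R. Let d(T⁻¹) denote the n × n matrix over Ω obtained by applying d entrywise to T⁻¹. Then the trace of the product d(T⁻¹)·T, namely the element Σᵢ Σⱼ Tⱼᵢ • d((T⁻¹)ᵢⱼ) of Ω, equals det(T) • d((det T)⁻¹) (note that det T is a unit of R); equivalently, tr(d(T⁻¹)·T) = −(det T)⁻¹ • d(det T). -/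
open Matrix

section aux
variable {R : Type*} [CommRing R] {Ω : Type*} [AddCommGroup Ω] [Module R Ω]

lemma deriv_one_aux (d : R →+ Ω) (hd : ∀ a b : R, d (a * b) = a • d b + b • d a) :
    d 1 = 0 := by
  have := hd 1 1
  simpa using this

lemma deriv_prod (d : R →+ Ω) (hd : ∀ a b : R, d (a * b) = a • d b + b • d a)
    {ι : Type*} [DecidableEq ι] (s : Finset ι) (f : ι → R) :
    d (∏ i ∈ s, f i) = ∑ i ∈ s, (∏ j ∈ s.erase i, f j) • d (f i) := by
  induction s using Finset.induction with
  | empty => simp [deriv_one_aux d hd]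
  | insert a s ha ih =>
    rw [Finset.prod_insert ha, hd, ih, Finset.sum_insert ha, Finset.erase_insert ha,
      Finset.smul_sum]
    rw [add_comm]
    congr 1
    refine Finset.sum_congr rfl fun i hi => ?_
    rw [smul_smul, Finset.erase_insert_of_ne (by rintro rfl; exact ha hi),
      Finset.prod_insert (fun h => ha (Finset.mem_of_mem_erase h))]

/-- Jacobi's formula. -/
lemma deriv_det (d : R →+ Ω) (hd : ∀ a b : R, d (a * b) = a • d b + b • d a)
    (n : ℕ) (T : Matrix (Fin n) (Fin n) R) :
    d T.det = ∑ i : Fin n, ∑ k : Fin n, T.adjugate i k • d (T k i) := by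
  have hadj : ∀ i k : Fin n, T.adjugate i k
      = ∑ σ : Equiv.Perm (Fin n),
          Equiv.Perm.sign σ • ((if σ i = k then (1 : R) else 0) *
            ∏ j ∈ Finset.univ.erase i, T (σ j) j) := by
    intro i k
    have h1 : T.adjugate i k = (T.updateCol i (Pi.single k 1)).det := by
      have h2 : Tᵀ.adjugate k i = T.adjugate i k := by
        rw [← Matrix.adjugate_transpose]; rfl
      rw [← h2, Matrix.adjugate_apply, Matrix.updateRow_transpose,
        Matrix.det_transpose]
    rw [h1, Matrix.det_apply]
    refine Finset.sum_congr rfl fun σ _ => ?_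
    congr 1
    rw [← Finset.mul_prod_erase Finset.univ _ (Finset.mem_univ i)]
    congr 1
    · rw [Matrix.updateCol_self, Pi.single_apply]
    · refine Finset.prod_congr rfl fun j hj => ?_
      rw [Matrix.updateCol_apply, if_neg (Finset.ne_of_mem_erase hj)]
  rw [Matrix.det_apply, map_sum]
  have step : ∀ σ : Equiv.Perm (Fin n),
      d (Equiv.Perm.sign σ • ∏ i, T (σ i) i)
        = ∑ i : Fin n, Equiv.Perm.sign σ •
            ((∏ j ∈ Finset.univ.erase i, T (σ j) j) • d (T (σ i) i)) := by
    intro σ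
    rw [Units.smul_def, map_zsmul, deriv_prod d hd, Finset.smul_sum]
    exact Finset.sum_congr rfl fun i _ => (Units.smul_def _ _).symm
  rw [Finset.sum_congr rfl fun σ _ => step σ, Finset.sum_comm]
  refine Finset.sum_congr rfl fun i _ => ?_
  have expand : ∀ σ : Equiv.Perm (Fin n),
      Equiv.Perm.sign σ • ((∏ j ∈ Finset.univ.erase i, T (σ j) j) • d (T (σ i) i))
        = ∑ k : Fin n, Equiv.Perm.sign σ •
            (((if σ i = k then (1:R) else 0) * ∏ j ∈ Finset.univ.erase i, T (σ j) j)
              • d (T k i)) := by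
    intro σ
    rw [Finset.sum_eq_single (σ i)]
    · simp
    · intro k _ hk
      rw [if_neg (fun h => hk h.symm)]
      simp
    · simp
  rw [Finset.sum_congr rfl fun σ _ => expand σ, Finset.sum_comm]
  refine Finset.sum_congr rfl fun k _ => ?_
  rw [hadj i k, Finset.sum_smul]
  refine Finset.sum_congr rfl fun σ _ => ?_
  rw [Units.smul_def, Units.smul_def, smul_assoc]

end aux

/-- Let `R` be a commutative ring, `Ω` an `R`-module and `d : R → Ω` a
derivation (an additive map satisfying the Leibniz rule).  Let `T` be an invertible
`n × n` matrix over `R` (i.e. `det T` is a unit).  Then the trace of the matrix product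
`d(T⁻¹)·T`, namely `Σᵢ Σⱼ Tⱼᵢ • d((T⁻¹)ᵢⱼ)`, equals `det T • d((det T)⁻¹)`;
equivalently it equals `−(det T)⁻¹ • d(det T)`. -/
theorem trace_derivation_inv_mul {R : Type*} [CommRing R] {Ω : Type*} [AddCommGroup Ω]
    [Module R Ω] (d : R →+ Ω) (hd : ∀ a b : R, d (a * b) = a • d b + b • d a)
    (n : ℕ) (T : Matrix (Fin n) (Fin n) R) (hT : IsUnit T.det) :
    (∑ i : Fin n, ∑ j : Fin n, T j i • d (T⁻¹ i j))
        = T.det • d (Ring.inverse T.det) ∧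
      (∑ i : Fin n, ∑ j : Fin n, T j i • d (T⁻¹ i j))
        = -(Ring.inverse T.det • d T.det) := by
  set u := Ring.inverse T.det with hu
  have hud : u * T.det = 1 := Ring.inverse_mul_cancel _ hT
  have hkey : T.det • d u = -(u • d T.det) := by
    have h := hd u T.det
    rw [hud, deriv_one_aux d hd] at h
    exact eq_neg_of_add_eq_zero_right h.symm
  have hrow : ∀ i : Fin n,
      ∑ j : Fin n, (T⁻¹ i j • d (T j i) + T j i • d (T⁻¹ i j)) = 0 := by
    intro i
    have h1 : ∑ j : Fin n, T⁻¹ i j * T j i = 1 := by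
      have := Matrix.nonsing_inv_mul T hT
      have h2 := congrFun (congrFun this i) i
      rwa [Matrix.mul_apply, Matrix.one_apply_eq] at h2
    have h3 := congrArg d h1
    rw [map_sum, deriv_one_aux d hd] at h3
    rw [← h3]
    exact Finset.sum_congr rfl fun j _ => (hd _ _).symm
  have hmain : (∑ i : Fin n, ∑ j : Fin n, T j i • d (T⁻¹ i j))
      = -(u • d T.det) := by
    have hsplit : (0 : Ω) = (∑ i : Fin n, ∑ j : Fin n, T⁻¹ i j • d (T j i))
        + ∑ i : Fin n, ∑ j : Fin n, T j i • d (T⁻¹ i j) := by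
      rw [← Finset.sum_add_distrib]
      rw [show (0:Ω) = ∑ _i : Fin n, (0:Ω) by simp]
      exact Finset.sum_congr rfl fun i _ => by
        rw [← Finset.sum_add_distrib, hrow i]
    have hjac : (∑ i : Fin n, ∑ j : Fin n, T⁻¹ i j • d (T j i)) = u • d T.det := by
      rw [deriv_det d hd n T, Finset.smul_sum]
      refine Finset.sum_congr rfl fun i _ => ?_
      rw [Finset.smul_sum]
      refine Finset.sum_congr rfl fun j _ => ?_
      rw [Matrix.inv_def, Matrix.smul_apply, smul_eq_mul, mul_smul]
    rw [hjac] at hsplit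
    exact eq_neg_of_add_eq_zero_right hsplit.symm
  exact ⟨hmain.trans hkey.symm, hmain⟩
end

section
/- Let R be a ring, and let K, L, M be cochain complexes of R-modules with chain maps f : K → M and g : L → M that are quasi-isomorphisms. Let C denote the mapping cone of the chain map K ⊕ L → M given by −f on the summand K and by g on the summand L. Then the composite C → (K ⊕ L)[1] → M[1], where the first map is the canonical projection from the mapping cone and the second map is f[1] on the summand K[1] and 0 on the summand L[1], is a quasi-isomorphism. -/
section Aux

open CategoryTheory CategoryTheory.Limits CategoryTheory.Pretriangulated DerivedCategory

open CategoryTheory CategoryTheory.Limits CategoryTheory.Pretriangulated in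
private lemma quasiIso_mappingCone_proj_comp_aux {R : Type*} [Ring R]
    [HasDerivedCategory (ModuleCat R)]
    (K L M : CochainComplex (ModuleCat R) ℤ)
    (f : K ⟶ M) (g : L ⟶ M) [QuasiIso f] [QuasiIso g] :
    IsIso (Q.map
      ((CochainComplex.mappingCone.triangle (biprod.desc (-f) g)).mor₃ ≫
        (shiftFunctor (CochainComplex (ModuleCat R) ℤ) (1 : ℤ)).map (biprod.desc f (0 : L ⟶ M)))) := by
  haveI : PreservesBiproductsOfShape WalkingPair (Q (C := ModuleCat R)) :=
    PreservesFiniteBiproducts.preserves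
  haveI : PreservesBinaryBiproducts (Q (C := ModuleCat R)) :=
    preservesBinaryBiproducts_of_preservesBiproducts _
  set φ : K ⊞ L ⟶ M := biprod.desc (-f) g with hφ
  set ψ : K ⊞ L ⟶ M := biprod.desc (0 : K ⟶ M) g with hψ
  set u : K ⊞ L ⟶ M := biprod.desc f (0 : L ⟶ M) with hu
  set h : Q.obj K ⟶ Q.obj L := Q.map f ≫ inv (Q.map g) with hh
  set a : Q.obj (K ⊞ L) ⟶ Q.obj (K ⊞ L) :=
    𝟙 _ + Q.map (biprod.fst : K ⊞ L ⟶ K) ≫ h ≫ Q.map (biprod.inr : L ⟶ K ⊞ L) with haa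
  have key0 : Q.map (biprod.inr : L ⟶ K ⊞ L) ≫ Q.map (biprod.fst : K ⊞ L ⟶ K) = 0 := by
    rw [← Q.map_comp]; simp
  have hainv : IsIso a := by
    refine ⟨𝟙 _ - Q.map (biprod.fst : K ⊞ L ⟶ K) ≫ h ≫ Q.map (biprod.inr : L ⟶ K ⊞ L), ?_, ?_⟩ <;>
    · simp only [haa, Preadditive.comp_sub, Preadditive.comp_add, Preadditive.add_comp,
        Preadditive.sub_comp, Category.comp_id, Category.id_comp, Category.assoc]
      rw [reassoc_of% key0]
      simp
  have hfφ : φ + (biprod.fst : K ⊞ L ⟶ K) ≫ f = ψ := by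
    apply biprod.hom_ext' <;> simp [hφ, hψ]
  have ha : a ≫ Q.map φ = Q.map ψ := by
    have h1 : Q.map (biprod.inr : L ⟶ K ⊞ L) ≫ Q.map φ = Q.map g := by
      rw [← Q.map_comp]; simp [hφ]
    have h2 : h ≫ Q.map g = Q.map f := by simp [hh]
    simp only [haa, Preadditive.add_comp, Category.id_comp, Category.assoc, h1, h2]
    rw [← Q.map_comp, ← Q.map_add, hfφ]
  have hau : a ≫ Q.map u = Q.map u := by
    have h1 : Q.map (biprod.inr : L ⟶ K ⊞ L) ≫ Q.map u = 0 := by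
      rw [← Q.map_comp]; simp [hu]
    simp [haa, Preadditive.add_comp, h1]
  -- distinguished triangles
  set Tφ := Q.mapTriangle.obj (CochainComplex.mappingCone.triangle φ) with hTφdef
  set Tψ := Q.mapTriangle.obj (CochainComplex.mappingCone.triangle ψ) with hTψdef
  have hTφ : Tφ ∈ distTriang (DerivedCategory (ModuleCat R)) := by
    rw [mem_distTriang_iff]; exact ⟨_, _, φ, ⟨Iso.refl _⟩⟩
  have hTψ : Tψ ∈ distTriang (DerivedCategory (ModuleCat R)) := by
    rw [mem_distTriang_iff]; exact ⟨_, _, ψ, ⟨Iso.refl _⟩⟩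
  set Ts : Triangle (DerivedCategory (ModuleCat R)) :=
    Triangle.mk (Q.map (biprod.inl : K ⟶ K ⊞ L)) (Q.map (biprod.snd : K ⊞ L ⟶ L))
      (0 : Q.obj L ⟶ (Q.obj K)⟦(1 : ℤ)⟧) with hTsdef
  have hTs : Ts ∈ distTriang (DerivedCategory (ModuleCat R)) := by
    refine isomorphic_distinguished _
      (binaryBiproductTriangle_distinguished (Q.obj K) (Q.obj L)) _ ?_
    refine Triangle.isoMk _ _ (Iso.refl _) (Q.mapBiprod K L) (Iso.refl _) ?_ ?_ ?_
    · dsimp [Ts]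
      erw [Category.id_comp]
      apply biprod.hom_ext
      · erw [Category.assoc, biprod.lift_fst, ← Q.map_comp, biprod.inl_fst, Q.map_id, biprod.inl_fst]
        rfl
      · erw [Category.assoc, biprod.lift_snd, ← Q.map_comp, biprod.inl_snd, Q.map_zero, biprod.inl_snd]
        rfl
    · dsimp [Ts]
      erw [Category.comp_id]
      simp
      erw [biprod.lift_snd]
    · simp [Ts]
      erw [zero_comp, comp_zero]
  -- iso between rotated split triangle and Tψ
  have hsndg : (biprod.snd : K ⊞ L ⟶ L) ≫ g = ψ := by
    apply biprod.hom_ext' <;> simp [hψ]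
  set i1 := isoTriangleOfIso₁₂ Ts.rotate Tψ (rot_of_distTriang _ hTs) hTψ
    (Iso.refl _) (@asIso _ _ _ _ (Q.map g) (inferInstance : IsIso (Q.map g))) (by
      dsimp [Ts]
      erw [Category.id_comp, ← Q.map_comp, hsndg]
      rfl) with hi1
  have c1 := i1.hom.comm₃
  have e1iso : IsIso i1.hom.hom₃ := (inferInstance : IsIso (Triangle.π₃.map i1.hom))
  have hinlu : (biprod.inl : K ⟶ K ⊞ L) ≫ u = f := by simp [hu]
  -- compute
  haveI : IsIso (-((Q.map f)⟦(1 : ℤ)⟧')) :=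
    ⟨-(inv ((Q.map f)⟦(1 : ℤ)⟧')), by simp, by simp⟩
  have hTψu : IsIso (Tψ.mor₃ ≫ (Q.map u)⟦(1 : ℤ)⟧') := by
    have key : i1.hom.hom₃ ≫ Tψ.mor₃ ≫ (Q.map u)⟦(1 : ℤ)⟧' = -((Q.map f)⟦(1 : ℤ)⟧') := by
      rw [← reassoc_of% c1]
      have h1 : i1.hom.hom₁ = 𝟙 _ := rfl
      erw [h1, CategoryTheory.Functor.map_id, Category.id_comp]
      have h2 : Ts.rotate.mor₃ = -((Q.map (biprod.inl : K ⟶ K ⊞ L))⟦(1 : ℤ)⟧') := rfl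
      erw [h2, Preadditive.neg_comp, ← Functor.map_comp, ← Q.map_comp, hinlu]
      rfl
    have : IsIso (i1.hom.hom₃ ≫ Tψ.mor₃ ≫ (Q.map u)⟦(1 : ℤ)⟧') := by
      rw [key]; exact this
    exact IsIso.of_isIso_comp_left i1.hom.hom₃ _
  -- iso between Tφ and Tψ
  set i2 := isoTriangleOfIso₁₂ Tφ Tψ hTφ hTψ (asIso a).symm (Iso.refl _) (by
      dsimp
      erw [Category.comp_id, IsIso.eq_inv_comp]
      exact ha) with hi2
  have c2 := i2.hom.comm₃
  haveI : IsIso i2.hom.hom₃ := (inferInstance : IsIso (Triangle.π₃.map i2.hom))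
  haveI hTφu : IsIso (Tφ.mor₃ ≫ (Q.map u)⟦(1 : ℤ)⟧') := by
    have hinvau : inv a ≫ Q.map u = Q.map u := by
      rw [IsIso.inv_comp_eq, hau]
    have : Tφ.mor₃ ≫ (Q.map u)⟦(1 : ℤ)⟧' =
        i2.hom.hom₃ ≫ Tψ.mor₃ ≫ (Q.map u)⟦(1 : ℤ)⟧' := by
      rw [← reassoc_of% c2]
      have h1 : i2.hom.hom₁ = inv a := rfl
      erw [h1, ← Functor.map_comp, hinvau]
      rfl
    rw [this]
    exact IsIso.comp_isIso
  -- relate to the statement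
  have nat := (Q.commShiftIso (1 : ℤ)).hom.naturality u
  dsimp at nat
  have hmor3 : Q.map (CochainComplex.mappingCone.triangle φ).mor₃ ≫
      (Q.commShiftIso (1 : ℤ)).hom.app (K ⊞ L) = Tφ.mor₃ := rfl
  have hshift : Q.map ((shiftFunctor (CochainComplex (ModuleCat R) ℤ) (1 : ℤ)).map u) =
      (Q.commShiftIso (1 : ℤ)).hom.app (K ⊞ L) ≫ (Q.map u)⟦(1 : ℤ)⟧' ≫
        inv ((Q.commShiftIso (1 : ℤ)).hom.app M) := by
    rw [← IsIso.eq_comp_inv] at nat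
    rw [nat, Category.assoc]
  have final : Q.map ((CochainComplex.mappingCone.triangle φ).mor₃ ≫
      (shiftFunctor (CochainComplex (ModuleCat R) ℤ) (1 : ℤ)).map u) =
      (Tφ.mor₃ ≫ (Q.map u)⟦(1 : ℤ)⟧') ≫ inv ((Q.commShiftIso (1 : ℤ)).hom.app M) := by
    erw [Q.map_comp, hshift]
    simp only [Category.assoc]
    exact (Category.assoc _ _ _).symm
  rw [final]
  exact IsIso.comp_isIso' hTφu inferInstance


end Aux


open CategoryTheory CategoryTheory.Limits

/-- Let `K, L, M` be cochain complexes of `R`-modules and let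
`f : K ⟶ M`, `g : L ⟶ M` be quasi-isomorphisms.  Let `C` be the mapping cone of the map
`K ⊞ L ⟶ M` given by `−f` on `K` and `g` on `L`.  Then the composite
`C ⟶ (K ⊞ L)[1] ⟶ M[1]`, where the first map is the canonical projection from the
mapping cone and the second is `f[1]` on `K[1]` and `0` on `L[1]`, is a
quasi-isomorphism. -/
theorem quasiIso_mappingCone_proj_comp {R : Type*} [Ring R]
    (K L M : CochainComplex (ModuleCat R) ℤ)
    (f : K ⟶ M) (g : L ⟶ M) [QuasiIso f] [QuasiIso g] :
    QuasiIso
      ((CochainComplex.mappingCone.triangle (biprod.desc (-f) g)).mor₃ ≫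
        (shiftFunctor (CochainComplex (ModuleCat R) ℤ) (1 : ℤ)).map
          (biprod.desc f (0 : L ⟶ M))) := by
  letI : HasDerivedCategory (ModuleCat R) := HasDerivedCategory.standard _
  rw [← HomologicalComplex.mem_quasiIso_iff,
    ← HomologicalComplexUpToQuasiIso.isIso_Q_map_iff_mem_quasiIso]
  exact quasiIso_mappingCone_proj_comp_aux K L M f g
end
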